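/- arXiv:2212.07002 — 2 statements merged into one kernel-verified Lean document; each statement's English description precedes it below -/
import Mathlib

section
/- Let m be the maximum cardinality of a feasible schedule, and let (J^g_1, t_1), …, (J^g_x, t_x) be any greedy sequence for the instance. Then 2x ≥ m; that is, the greedy algorithm schedules at least ⌈m/2⌉ jobs and is a 1/2-approximation for maximizing the number of feasibly scheduled jobs. -/
/-- The energy available immediately before slot `t`:
the total energy harvestable at slots `1,…,t-1`, minus, for each job `i ∈ J`
scheduled at a slot `σ i < t`, its energy requirement `e i` plus the harvestable
energy `h (σ i)` lost at its execution slot. -/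
def energyBefore (e h : ℕ → ℤ) (J : Finset ℕ) (σ : ℕ → ℕ) (t : ℕ) : ℤ :=
  (∑ τ ∈ Finset.Icc 1 (t - 1), h τ) -
    ∑ i ∈ J.filter (fun i => σ i < t), (e i + h (σ i))

/-- A schedule `(J, σ)` is feasible for an EAS instance with `n` jobs, `T` slots,
release times `r`, due dates `d`, energy requirements `e` and harvest profile `h`. -/
def IsFeasible (n T : ℕ) (r d : ℕ → ℕ) (e h : ℕ → ℤ)
    (J : Finset ℕ) (σ : ℕ → ℕ) : Prop :=
  J ⊆ Finset.Icc 1 n ∧ Set.InjOn σ ↑J ∧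
    ∀ i ∈ J, 1 ≤ σ i ∧ σ i ≤ T ∧ r i ≤ σ i ∧ σ i ≤ d i ∧
      e i ≤ energyBefore e h J σ (σ i)


/-- `(g, σ)` is a greedy sequence of length `x`: `g 1, …, g x` are the (pairwise
distinct) jobs scheduled by the greedy algorithm, in order, and `σ (g ℓ)` is the
(pairwise distinct) time slot assigned to job `g ℓ`.  For every `ℓ`, the partial
greedy schedule `G_ℓ` (jobs `g 1, …, g ℓ` at their slots) is feasible, and the
pair `(g ℓ, σ (g ℓ))` minimizes `e j + h t` over all pairs `(j, t)` of an
unscheduled job and an unused slot whose addition to `G_{ℓ-1}` keeps the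
schedule feasible; moreover the sequence is maximal. -/
def GreedySeq (n T : ℕ) (r d : ℕ → ℕ) (e h : ℕ → ℤ)
    (x : ℕ) (g σ : ℕ → ℕ) : Prop :=
  Set.InjOn g ↑(Finset.Icc 1 x) ∧
  (∀ ℓ, 1 ≤ ℓ → ℓ ≤ x →
    IsFeasible n T r d e h ((Finset.Icc 1 ℓ).image g) σ ∧
      ∀ j t : ℕ, j ∈ Finset.Icc 1 n → j ∉ (Finset.Icc 1 (ℓ - 1)).image g →
        t ∈ Finset.Icc 1 T → t ∉ ((Finset.Icc 1 (ℓ - 1)).image g).image σ →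
        IsFeasible n T r d e h (insert j ((Finset.Icc 1 (ℓ - 1)).image g))
          (Function.update σ j t) →
        e (g ℓ) + h (σ (g ℓ)) ≤ e j + h t) ∧
  (∀ j t : ℕ, j ∈ Finset.Icc 1 n → j ∉ (Finset.Icc 1 x).image g →
    t ∈ Finset.Icc 1 T → t ∉ ((Finset.Icc 1 x).image g).image σ →
    ¬ IsFeasible n T r d e h (insert j ((Finset.Icc 1 x).image g))
        (Function.update σ j t))


/-!
A job `i` at slot `t` costs `e i + h t`: the energy it uses plus the harvest it forfeits. A
schedule meets its energy constraints exactly when, for every `t`, the jobs scheduled by `t` cost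
at most the energy harvestable in slots `1, …, t`.

Start from a maximum feasible schedule and follow the greedy run, keeping a feasible schedule that
extends the current greedy schedule and loses at most one job per greedy step. When the greedy
rule places `a` at slot `s`, drop from the extending schedule `a` itself and one job `j₀` outside
the greedy schedule (the one at slot `s` if there is one, the earliest one otherwise), and put `a`
at `s`. By the greedy choice `a` at `s` costs no more than `j₀` at its slot, so each prefix costs
no more than before, or, in prefixes ending before `j₀`, no more than in the new greedy schedule.
When the greedy run stops, maximality forces the extending schedule into the greedy one, hence
`m ≤ x + x`.
-/

open Finset Function

def load (e h : ℕ → ℤ) (J : Finset ℕ) (σ : ℕ → ℕ) (t : ℕ) : ℤ :=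
  ∑ i ∈ J with σ i ≤ t, (e i + h (σ i))

def harvest (h : ℕ → ℤ) (t : ℕ) : ℤ :=
  ∑ τ ∈ Icc 1 t, h τ

def IsSlotAssignment (n T : ℕ) (r d : ℕ → ℕ) (J : Finset ℕ) (σ : ℕ → ℕ) : Prop :=
  J ⊆ Icc 1 n ∧ Set.InjOn σ ↑J ∧ ∀ i ∈ J, 1 ≤ σ i ∧ σ i ≤ T ∧ r i ≤ σ i ∧ σ i ≤ d i

def Extends (G : Finset ℕ) (σ : ℕ → ℕ) (J : Finset ℕ) (σ' : ℕ → ℕ) : Prop :=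
  G ⊆ J ∧ Set.EqOn σ' σ ↑G

/-- The pairs among which the greedy rule chooses its next step from the schedule `(G, σ)`. -/
def IsCandidate (n T : ℕ) (r d : ℕ → ℕ) (e h : ℕ → ℤ) (G : Finset ℕ) (σ : ℕ → ℕ)
    (j t : ℕ) : Prop :=
  j ∈ Icc 1 n ∧ j ∉ G ∧ t ∈ Icc 1 T ∧ t ∉ G.image σ ∧
    IsFeasible n T r d e h (insert j G) (update σ j t)

lemma exists_eq_or_forall_le {D : Finset ℕ} (hD : D.Nonempty) {f : ℕ → ℕ}
    (hf : Set.InjOn f ↑D) (s : ℕ) :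
    ∃ j ∈ D, (f j ≤ s ∨ ∀ i ∈ D, f j ≤ f i) ∧ ∀ i ∈ D, f i = s → i = j := by
  by_cases hs : ∃ j ∈ D, f j = s
  · obtain ⟨j, hj, hjs⟩ := hs
    exact ⟨j, hj, Or.inl hjs.le, fun i hi his => hf hi hj (his.trans hjs.symm)⟩
  · push Not at hs
    obtain ⟨j, hj, hmin⟩ := exists_min_image D f hD
    exact ⟨j, hj, Or.inr hmin, fun i hi his => absurd his (hs i hi)⟩

lemma image_Icc_succ_of_injOn {x : ℕ} {g : ℕ → ℕ} (hinj : Set.InjOn g ↑(Icc 1 x)) {ℓ : ℕ}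
    (hℓ : ℓ + 1 ≤ x) :
    (Icc 1 (ℓ + 1)).image g = insert (g (ℓ + 1)) ((Icc 1 ℓ).image g) ∧
      g (ℓ + 1) ∉ (Icc 1 ℓ).image g := by
  refine ⟨by rw [← insert_Icc_right_eq_Icc_add_one (by omega), image_insert], fun hmem => ?_⟩
  obtain ⟨i, hi, hgi⟩ := mem_image.1 hmem
  rw [mem_Icc] at hi
  have : i = ℓ + 1 := hinj (mem_Icc.2 ⟨hi.1, by omega⟩) (mem_Icc.2 ⟨by omega, hℓ⟩) hgi
  omega

section

variable {n T : ℕ} {r d : ℕ → ℕ} {e h : ℕ → ℤ}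

lemma harvest_mono (hh : ∀ t, 0 ≤ h t) : Monotone (harvest h) := fun _ _ hst =>
  sum_le_sum_of_subset_of_nonneg (Icc_subset_Icc_right hst) fun τ _ _ => hh τ

lemma load_insert {J : Finset ℕ} {σ : ℕ → ℕ} {a : ℕ} (ha : a ∉ J) (t : ℕ) :
    load e h (insert a J) σ t = load e h J σ t + if σ a ≤ t then e a + h (σ a) else 0 := by
  unfold load
  rw [filter_insert]
  split_ifs
  · rw [sum_insert (fun h' => ha (mem_filter.1 h').1), add_comm]
  · rw [add_zero]

lemma load_update_of_notMem {J : Finset ℕ} {σ : ℕ → ℕ} {a : ℕ} (ha : a ∉ J) (s t : ℕ) :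
    load e h J (update σ a s) t = load e h J σ t := by
  have hσ : ∀ i ∈ J, update σ a s i = σ i := fun i hi =>
    update_of_ne (by rintro rfl; exact ha hi) _ _
  unfold load
  rw [filter_congr fun i hi => by rw [hσ i hi]]
  exact sum_congr rfl fun i hi => by rw [hσ i (mem_filter.1 hi).1]

lemma load_le_load (he : ∀ i, 0 ≤ e i) (hh : ∀ t, 0 ≤ h t) {J J₂ : Finset ℕ}
    {σ σ₂ : ℕ → ℕ} {t : ℕ} (hsub : ∀ i ∈ J₂, σ₂ i ≤ t → i ∈ J ∧ σ i = σ₂ i) :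
    load e h J₂ σ₂ t ≤ load e h J σ t := by
  unfold load
  calc ∑ i ∈ J₂ with σ₂ i ≤ t, (e i + h (σ₂ i))
      = ∑ i ∈ J₂ with σ₂ i ≤ t, (e i + h (σ i)) :=
        sum_congr rfl fun i hi => by
          rw [mem_filter] at hi
          rw [(hsub i hi.1 hi.2).2]
    _ ≤ ∑ i ∈ J with σ i ≤ t, (e i + h (σ i)) := by
        refine sum_le_sum_of_subset_of_nonneg (fun i hi => ?_)
          fun i _ _ => add_nonneg (he i) (hh _)
        rw [mem_filter] at hi ⊢
        obtain ⟨hiJ, hσi⟩ := hsub i hi.1 hi.2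
        exact ⟨hiJ, hσi ▸ hi.2⟩

lemma le_energyBefore_iff {J : Finset ℕ} {σ : ℕ → ℕ} (hinj : Set.InjOn σ ↑J) {i : ℕ}
    (hi : i ∈ J) (hσi : 1 ≤ σ i) :
    e i ≤ energyBefore e h J σ (σ i) ↔ load e h J σ (σ i) ≤ harvest h (σ i) := by
  have hfilter : J.filter (fun j => σ j ≤ σ i) = insert i (J.filter (fun j => σ j < σ i)) := by
    ext j
    simp only [mem_filter, mem_insert]
    constructor
    · rintro ⟨hj, hle⟩
      rcases hle.lt_or_eq with hlt | heq
      · exact Or.inr ⟨hj, hlt⟩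
      · exact Or.inl (hinj hj hi heq)
    · rintro (rfl | ⟨hj, hlt⟩)
      exacts [⟨hi, le_rfl⟩, ⟨hj, hlt.le⟩]
  obtain ⟨k, hk⟩ : ∃ k, σ i = k + 1 := ⟨σ i - 1, by omega⟩
  have hharvest : harvest h (σ i) = ∑ τ ∈ Icc 1 (σ i - 1), h τ + h (σ i) := by
    rw [harvest, hk, sum_Icc_succ_top (by omega), Nat.add_sub_cancel]
  rw [load, hfilter, sum_insert (by simp), hharvest, energyBefore]
  constructor <;> intro <;> linarith

lemma isFeasible_iff (hh : ∀ t, 0 ≤ h t) {J : Finset ℕ} {σ : ℕ → ℕ} :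
    IsFeasible n T r d e h J σ ↔
      IsSlotAssignment n T r d J σ ∧ ∀ t, load e h J σ t ≤ harvest h t := by
  constructor
  · rintro ⟨hJn, hinj, hjob⟩
    refine ⟨⟨hJn, hinj, fun i hi => ?_⟩, fun t => ?_⟩
    · obtain ⟨h1, h2, h3, h4, -⟩ := hjob i hi
      exact ⟨h1, h2, h3, h4⟩
    rcases (J.filter (fun j => σ j ≤ t)).eq_empty_or_nonempty with hempty | hne
    · rw [load, hempty, sum_empty]
      exact sum_nonneg fun τ _ => hh τ
    -- the last job scheduled by `t` sees the whole load up to `t`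
    obtain ⟨i, hi, hlast⟩ := exists_max_image _ σ hne
    rw [mem_filter] at hi
    obtain ⟨h1, -, -, -, henergy⟩ := hjob i hi.1
    have hload : load e h J σ t = load e h J σ (σ i) := by
      unfold load
      rw [filter_congr fun j hj => ⟨fun hjt => hlast j (mem_filter.2 ⟨hj, hjt⟩),
        fun hji => hji.trans hi.2⟩]
    rw [hload]
    exact ((le_energyBefore_iff hinj hi.1 h1).1 henergy).trans (harvest_mono hh hi.2)
  · rintro ⟨⟨hJn, hinj, hwin⟩, hload⟩
    refine ⟨hJn, hinj, fun i hi => ?_⟩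
    obtain ⟨h1, h2, h3, h4⟩ := hwin i hi
    exact ⟨h1, h2, h3, h4, (le_energyBefore_iff hinj hi h1).2 (hload (σ i))⟩

lemma IsFeasible.mono (he : ∀ i, 0 ≤ e i) (hh : ∀ t, 0 ≤ h t) {J J₂ : Finset ℕ}
    {σ σ₂ : ℕ → ℕ} (hf : IsFeasible n T r d e h J σ) (hsub : J₂ ⊆ J)
    (heq : Set.EqOn σ₂ σ ↑J₂) : IsFeasible n T r d e h J₂ σ₂ := by
  obtain ⟨⟨hJn, hinj, hwin⟩, hload⟩ := (isFeasible_iff hh).1 hf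
  refine (isFeasible_iff hh).2 ⟨⟨hsub.trans hJn, (hinj.mono (by simpa)).congr heq.symm,
    fun i hi => heq hi ▸ hwin i (hsub hi)⟩, fun t => ?_⟩
  exact (load_le_load he hh fun i hi _ => ⟨hsub hi, (heq hi).symm⟩).trans (hload t)

lemma IsFeasible.isCandidate_of_extends (he : ∀ i, 0 ≤ e i) (hh : ∀ t, 0 ≤ h t)
    {G J : Finset ℕ} {σ σ' : ℕ → ℕ} (hf : IsFeasible n T r d e h J σ')
    (hext : Extends G σ J σ') {j : ℕ} (hj : j ∈ J) (hjG : j ∉ G) :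
    IsCandidate n T r d e h G σ j (σ' j) := by
  obtain ⟨hJn, hinj, hjob⟩ := hf
  obtain ⟨h1, hT, -⟩ := hjob j hj
  refine ⟨hJn hj, hjG, mem_Icc.2 ⟨h1, hT⟩, fun hslot => ?_, ?_⟩
  · obtain ⟨i, hi, hσi⟩ := mem_image.1 hslot
    have : i = j := hinj (hext.1 hi) hj ((hext.2 hi).trans hσi)
    exact hjG (this ▸ hi)
  · refine IsFeasible.mono he hh ⟨hJn, hinj, hjob⟩ (insert_subset hj hext.1) fun i hi => ?_
    rcases mem_insert.1 hi with rfl | hiG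
    · exact update_self _ _ _
    · rw [update_of_ne (by rintro rfl; exact hjG hiG)]
      exact (hext.2 hiG).symm

lemma IsFeasible.subset_of_forall_not_isCandidate (he : ∀ i, 0 ≤ e i) (hh : ∀ t, 0 ≤ h t)
    {G J : Finset ℕ} {σ σ' : ℕ → ℕ} (hmax : ∀ j t, ¬ IsCandidate n T r d e h G σ j t)
    (hf : IsFeasible n T r d e h J σ') (hext : Extends G σ J σ') : J ⊆ G := fun j hj =>
  by_contra fun hjG => hmax j _ (hf.isCandidate_of_extends he hh hext hj hjG)

lemma load_exchange_le (he : ∀ i, 0 ≤ e i) (hh : ∀ t, 0 ≤ h t)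
    {G J : Finset ℕ} {σ σ' : ℕ → ℕ} {a j₀ t : ℕ} {c : ℤ} (hext : Extends G σ J σ')
    (haG : a ∉ G) (hj₀ : j₀ ∈ J) (hcost : e a + h (σ a) ≤ e j₀ + h (σ' j₀))
    (hfirst : σ' j₀ ≤ σ a ∨ ∀ i ∈ J, i ∉ G → σ' j₀ ≤ σ' i)
    (hJ : load e h J σ' t ≤ c) (hG : load e h (insert a G) σ t ≤ c) :
    load e h (insert a ((J.erase j₀).erase a)) (update σ' a (σ a)) t ≤ c := by
  set K := (J.erase j₀).erase a
  have haK : a ∉ K := notMem_erase _ _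
  have hj₀K : j₀ ∉ K := fun hj => notMem_erase _ _ (mem_of_mem_erase hj)
  have hKJ : K ⊆ J := (erase_subset _ _).trans (erase_subset _ _)
  rw [load_insert haK, load_update_of_notMem haK, update_self]
  split_ifs with hat
  swap
  · simpa using (load_le_load he hh fun i hi _ => ⟨hKJ hi, rfl⟩).trans hJ
  by_cases hj₀t : σ' j₀ ≤ t
  · have hj₀load : load e h K σ' t + (e j₀ + h (σ' j₀)) ≤ load e h J σ' t := by
      have := load_insert (e := e) (h := h) (σ := σ') hj₀K t
      rw [if_pos hj₀t] at this
      rw [← this]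
      exact load_le_load he hh fun i hi _ => ⟨insert_subset hj₀ hKJ hi, rfl⟩
    linarith
  · -- every job of `K` scheduled by `t` comes before `j₀`, hence lies in `G`
    have hKG : load e h K σ' t ≤ load e h G σ t := by
      refine load_le_load he hh fun i hi hit => ?_
      have hiG : i ∈ G := by
        by_contra hiG
        exact hj₀t ((hfirst.resolve_left fun h' => hj₀t (h'.trans hat)) i (hKJ hi) hiG
          |>.trans hit)
      exact ⟨hiG, (hext.2 hiG).symm⟩
    rw [load_insert haG, if_pos hat] at hG
    linarith

lemma IsFeasible.exchange (he : ∀ i, 0 ≤ e i) (hh : ∀ t, 0 ≤ h t)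
    {G J : Finset ℕ} {σ σ' : ℕ → ℕ} {a j₀ : ℕ}
    (hf : IsFeasible n T r d e h J σ') (hext : Extends G σ J σ')
    (hfa : IsFeasible n T r d e h (insert a G) σ) (haG : a ∉ G) (hj₀ : j₀ ∈ J)
    (hcost : e a + h (σ a) ≤ e j₀ + h (σ' j₀))
    (hfirst : σ' j₀ ≤ σ a ∨ ∀ i ∈ J, i ∉ G → σ' j₀ ≤ σ' i)
    (hslot : ∀ i ∈ J, σ' i = σ a → i = j₀) :
    IsFeasible n T r d e h (insert a ((J.erase j₀).erase a)) (update σ' a (σ a)) := by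
  set K := (J.erase j₀).erase a
  obtain ⟨⟨hJn, hinj, hwin⟩, hload⟩ := (isFeasible_iff hh).1 hf
  obtain ⟨⟨hGn, -, hwinG⟩, hloadG⟩ := (isFeasible_iff hh).1 hfa
  have haK : a ∉ K := notMem_erase _ _
  have hj₀K : j₀ ∉ K := fun hj => notMem_erase _ _ (mem_of_mem_erase hj)
  have hKJ : K ⊆ J := (erase_subset _ _).trans (erase_subset _ _)
  have hupdate : Set.EqOn (update σ' a (σ a)) σ' ↑K := fun i hi =>
    update_of_ne (by rintro rfl; exact haK hi) _ _
  refine (isFeasible_iff hh).2 ⟨⟨insert_subset (hGn (mem_insert_self _ _)) (hKJ.trans hJn),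
    ?_, fun i hi => ?_⟩, fun t =>
      load_exchange_le he hh hext haG hj₀ hcost hfirst (hload t) (hloadG t)⟩
  · rw [coe_insert, Set.injOn_insert (by simpa)]
    refine ⟨(hinj.mono (by simpa)).congr hupdate.symm, ?_⟩
    rintro ⟨i, hi, hσi⟩
    rw [update_self, hupdate hi] at hσi
    exact hj₀K (hslot i (hKJ hi) hσi ▸ hi)
  · rcases mem_insert.1 hi with rfl | hi
    · rw [update_self]
      exact hwinG i (mem_insert_self _ _)
    · rw [hupdate hi]
      exact hwin i (hKJ hi)

lemma IsFeasible.exists_extends_insert (he : ∀ i, 0 ≤ e i) (hh : ∀ t, 0 ≤ h t)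
    {G J : Finset ℕ} {σ σ' : ℕ → ℕ} {a : ℕ}
    (hf : IsFeasible n T r d e h J σ') (hext : Extends G σ J σ')
    (hfa : IsFeasible n T r d e h (insert a G) σ) (haG : a ∉ G)
    (hmin : ∀ j t, IsCandidate n T r d e h G σ j t → e a + h (σ a) ≤ e j + h t) :
    ∃ J' σ'', IsFeasible n T r d e h J' σ'' ∧ Extends (insert a G) σ J' σ'' ∧
      #J ≤ #J' + 1 := by
  by_cases hJG : J ⊆ G
  · refine ⟨insert a G, σ, hfa, ⟨subset_rfl, Set.eqOn_refl _ _⟩, ?_⟩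
    have := card_le_card (hJG.trans (subset_insert a G))
    omega
  obtain ⟨j₀, hj₀, hfirst, hslot⟩ := exists_eq_or_forall_le (sdiff_nonempty.2 hJG)
    (hf.2.1.mono (by simp)) (σ a)
  rw [mem_sdiff] at hj₀
  have hslot' : ∀ i ∈ J, σ' i = σ a → i = j₀ := by
    intro i hi hσi
    refine hslot i (mem_sdiff.2 ⟨hi, fun hiG => haG ?_⟩) hσi
    have := hfa.2.1 (by simp [hiG]) (by simp) ((hext.2 hiG).symm.trans hσi)
    exact this ▸ hiG
  refine ⟨_, _, hf.exchange he hh hext hfa haG hj₀.1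
    (hmin _ _ (hf.isCandidate_of_extends he hh hext hj₀.1 hj₀.2))
    (hfirst.imp_right fun hle i hi hiG => hle i (mem_sdiff.2 ⟨hi, hiG⟩)) hslot', ⟨?_, ?_⟩, ?_⟩
  · refine insert_subset_insert a fun i hi => ?_
    refine mem_erase.2 ⟨?_, mem_erase.2 ⟨?_, hext.1 hi⟩⟩
    · rintro rfl; exact haG hi
    · rintro rfl; exact hj₀.2 hi
  · intro i hi
    rcases mem_insert.1 (mem_coe.1 hi) with rfl | hiG
    · exact update_self _ _ _
    · rw [update_of_ne (by rintro rfl; exact haG hiG)]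
      exact hext.2 hiG
  · rw [card_insert_of_notMem (notMem_erase _ _)]
    have h₁ := pred_card_le_card_erase (s := J) (a := j₀)
    have h₂ := pred_card_le_card_erase (s := J.erase j₀) (a := a)
    have h₃ := card_pos.2 ⟨j₀, hj₀.1⟩
    omega

lemma GreedySeq.exists_extends (he : ∀ i, 0 ≤ e i) (hh : ∀ t, 0 ≤ h t) {x : ℕ}
    {g σ : ℕ → ℕ} (hg : GreedySeq n T r d e h x g σ) {J : Finset ℕ} {σ₀ : ℕ → ℕ}
    (hf : IsFeasible n T r d e h J σ₀) {ℓ : ℕ} (hℓ : ℓ ≤ x) :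
    ∃ J' σ', IsFeasible n T r d e h J' σ' ∧ Extends ((Icc 1 ℓ).image g) σ J' σ' ∧
      #J ≤ #J' + ℓ := by
  induction ℓ with
  | zero => exact ⟨J, σ₀, hf, ⟨by simp, by simp⟩, by omega⟩
  | succ ℓ ih =>
    obtain ⟨J', σ', hf', hext, hcard⟩ := ih (by omega)
    obtain ⟨hfeas, hmin⟩ := hg.2.1 (ℓ + 1) (by omega) hℓ
    obtain ⟨himage, hnew⟩ := image_Icc_succ_of_injOn hg.1 hℓ
    rw [himage] at hfeas ⊢
    obtain ⟨J'', σ'', hf'', hext', hcard'⟩ := hf'.exists_extends_insert he hh hext hfeas hnew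
      fun j t ⟨hj, hjG, ht, htG, hjt⟩ => hmin j t hj hjG ht htG hjt
    exact ⟨J'', σ'', hf'', hext', by omega⟩

end

/-- If `m` is the maximum cardinality of a feasible schedule and
`(g, σ)` is any greedy sequence of length `x`, then `2x ≥ m`: the greedy
algorithm is a `1/2`-approximation for maximizing the number of scheduled jobs. -/
theorem greedy_half_approx (n T : ℕ) (r d : ℕ → ℕ) (e h : ℕ → ℤ)
    (he : ∀ i, 0 ≤ e i) (hh : ∀ t, 0 ≤ h t)
    (m : ℕ)
    (hm : IsGreatest {c : ℕ | ∃ (J : Finset ℕ) (σ : ℕ → ℕ),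
      IsFeasible n T r d e h J σ ∧ J.card = c} m)
    (x : ℕ) (g σ : ℕ → ℕ) (hgreedy : GreedySeq n T r d e h x g σ) :
    m ≤ 2 * x := by
  obtain ⟨J₀, σ₀, hf₀, rfl⟩ := hm.1
  obtain ⟨J, σ', hf, hext, hcard⟩ := hgreedy.exists_extends he hh hf₀ le_rfl
  have hJ : J ⊆ (Icc 1 x).image g := hf.subset_of_forall_not_isCandidate he hh
    (fun j t ⟨hj, hjG, ht, htG, hjt⟩ => hgreedy.2.2 j t hj hjG ht htG hjt) hext
  calc #J₀ ≤ #J + x := hcard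
    _ ≤ #((Icc 1 x).image g) + x := by grw [hJ]
    _ ≤ #(Icc 1 x) + x := by grw [card_image_le]
    _ = 2 * x := by rw [Nat.card_Icc, Nat.add_sub_cancel, two_mul]
end

section
/- Let α_1 ≥ α_2 ≥ … ≥ α_n be positive integers with n > 2, let S = Σ_{i=1}^n α_i with S > 2, let β be an integer with 0 < β < S, and let k < n be a positive integer. Consider the EAS instance with T = 2n − k + 2 time slots and n jobs, where job i has r_i = i + 1, d_i = 2n − k + 2, and e_i = S²n² + α_i·(Sn), and where h_1 = k·(S²n²) + β·(Sn); h_t = S − α_{t−1} for t ∈ {2,…,n+1}; h_{n+2} = (n−k)·(S²n²) + (S−β)·(Sn) − S·(n−k−1) − β; and h_t = 0 for t ∈ {n+3,…,2n−k+2}. Then there exists a feasible schedule scheduling all n jobs if and only if there exists a set I ⊆ {1,…,n} with |I| = k and Σ_{i ∈ I} α_i = β. -/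
/-!
Write `M = S²n²` and `U = Sn`, so that `e i = M + α i * U`. Since `β < S`, both `(n - 1) S < U` and
`β U + (n - 1) S < M`, so an inequality `a M + b U ≤ k M + β U + (n - 1) S` with `k ≤ a` can be read
digit by digit: `a = k` and `b ≤ β`.

As the harvest profile is nonnegative, the stored energy of a feasible schedule never drops below
zero. Before slot `n + 2` the jobs `A` run in slots `2, …, n + 1` have been paid for out of
`h 1 + (n - 1) S = k M + β U + (n - 1) S`, so `|A| ≤ k` and `∑_A α ≤ β`. After the last slot, the
harvest lost at busy slots is at most `k S - β`. This excludes slot `n + 2`, whose harvest is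
huge, so at most `n - k` jobs run after it and `|A| = k`; and since jobs are released in order of
decreasing `α`, the job `i` run in slot `t ≤ n + 1` loses `S - α (t - 1) ≥ S - α i`, whence
`β ≤ ∑_A α`.

Conversely, run the jobs of `I` at their release slots, paid for by `h 1 = ∑_I e`, and the other
jobs from slot `n + 3` on: by then the harvest of the slots `1, …, n + 2` not used by `I` equals
`∑_i e i` exactly.
-/

open Finset

lemma sum_Icc_one_eq_sum_Icc_sub_one_add {M : Type*} [AddCommMonoid M] (f : ℕ → M) {t : ℕ}
    (ht : 1 ≤ t) : ∑ τ ∈ Icc 1 t, f τ = ∑ τ ∈ Icc 1 (t - 1), f τ + f t := by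
  obtain ⟨s, rfl⟩ := Nat.exists_eq_add_of_le' ht
  rw [sum_Icc_succ_top (Nat.le_add_left 1 s), Nat.add_sub_cancel]

lemma sum_Icc_one_succ_eq_add_sum {M : Type*} [AddCommMonoid M] (f : ℕ → M) (n : ℕ) :
    ∑ τ ∈ Icc 1 (n + 1), f τ = f 1 + ∑ i ∈ Icc 1 n, f (i + 1) := by
  rw [← insert_Icc_add_one_left_eq_Icc (by omega), sum_insert (by simp),
    ← image_add_right_Icc, sum_image (fun _ _ _ _ => Nat.add_right_cancel)]

lemma eq_and_le_of_mul_add_mul_le {a k b β c M U : ℤ} (h : a * M + b * U ≤ k * M + β * U + c)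
    (hka : k ≤ a) (hb : 0 ≤ b) (hU : 0 < U) (hM0 : 0 ≤ M) (hcU : c < U) (hM : β * U + c < M) :
    a = k ∧ b ≤ β := by
  have hak : a = k := by
    by_contra hne
    nlinarith [mul_nonneg (show 0 ≤ a - k - 1 by omega) hM0, mul_nonneg hb hU.le]
  subst hak
  exact ⟨rfl, Int.lt_add_one_iff.mp (lt_of_mul_lt_mul_right (by linarith) hU.le)⟩

lemma card_filter_lt_lt_card_filter_lt {s : Finset ℕ} {i j : ℕ} (hi : i ∈ s) (hij : i < j) :
    #{x ∈ s | x < i} < #{x ∈ s | x < j} := by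
  refine card_lt_card ⟨fun x hx => ?_, fun hsub => ?_⟩
  · simp only [mem_filter] at hx ⊢
    exact ⟨hx.1, hx.2.trans hij⟩
  simpa using hsub (mem_filter.mpr ⟨hi, hij⟩)

lemma card_filter_lt_lt_card {s : Finset ℕ} {i : ℕ} (hi : i ∈ s) : #{x ∈ s | x < i} < #s :=
  card_lt_card (filter_ssubset.mpr ⟨i, hi, lt_irrefl i⟩)

section EnergyDynamics

variable {e h : ℕ → ℤ} {J : Finset ℕ} {σ : ℕ → ℕ}

lemma energyBefore_one (hσ : ∀ i ∈ J, 1 ≤ σ i) : energyBefore e h J σ 1 = 0 := by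
  have : J.filter (fun i => σ i < 1) = ∅ :=
    filter_eq_empty_iff.mpr fun i hi => (hσ i hi).not_gt
  rw [energyBefore, this]
  simp

lemma energyBefore_succ_of_forall_ne {t : ℕ} (ht : 1 ≤ t) (hfree : ∀ i ∈ J, σ i ≠ t) :
    energyBefore e h J σ (t + 1) = energyBefore e h J σ t + h t := by
  have hjobs : J.filter (fun i => σ i < t + 1) = J.filter (fun i => σ i < t) :=
    filter_congr fun i hi => by have := hfree i hi; omega
  rw [energyBefore, energyBefore, hjobs, Nat.add_sub_cancel,
    sum_Icc_one_eq_sum_Icc_sub_one_add h ht]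
  ring

lemma energyBefore_succ_apply (hinj : Set.InjOn σ J) {i : ℕ} (hi : i ∈ J) (hσi : 1 ≤ σ i) :
    energyBefore e h J σ (σ i + 1) = energyBefore e h J σ (σ i) - e i := by
  have hjobs : J.filter (fun j => σ j < σ i + 1) = insert i (J.filter (fun j => σ j < σ i)) := by
    ext j
    simp only [mem_filter, mem_insert]
    constructor
    · rintro ⟨hj, hlt⟩
      rcases (Nat.lt_succ_iff.mp hlt).lt_or_eq with hlt | heq
      · exact Or.inr ⟨hj, hlt⟩
      · exact Or.inl (hinj hj hi heq)
    · rintro (rfl | ⟨hj, hlt⟩)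
      exacts [⟨hi, Nat.lt_succ_self _⟩, ⟨hj, by omega⟩]
  rw [energyBefore, energyBefore, hjobs, sum_insert (by simp), Nat.add_sub_cancel,
    sum_Icc_one_eq_sum_Icc_sub_one_add h hσi]
  ring

lemma IsFeasible.energyBefore_nonneg {n T : ℕ} {r d : ℕ → ℕ}
    (hfeas : IsFeasible n T r d e h J σ) (hh : ∀ t ∈ Icc 1 T, 0 ≤ h t) :
    ∀ t ≤ T + 1, 0 ≤ energyBefore e h J σ t := by
  obtain ⟨-, hinj, hjob⟩ := hfeas
  have hσ1 : ∀ i ∈ J, 1 ≤ σ i := fun i hi => (hjob i hi).1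
  intro t ht
  induction t with
  | zero => simp [energyBefore]
  | succ t ih =>
    rcases Nat.eq_zero_or_pos t with rfl | ht1
    · exact (energyBefore_one hσ1).ge
    by_cases hbusy : ∃ i ∈ J, σ i = t
    · obtain ⟨i, hi, rfl⟩ := hbusy
      rw [energyBefore_succ_apply hinj hi ht1]
      exact sub_nonneg.mpr (hjob i hi).2.2.2.2
    · push Not at hbusy
      rw [energyBefore_succ_of_forall_ne ht1 hbusy]
      exact add_nonneg (ih (by omega)) (hh t (mem_Icc.mpr ⟨ht1, by omega⟩))

lemma IsFeasible.sum_le_sum_Icc {n T : ℕ} {r d : ℕ → ℕ}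
    (hfeas : IsFeasible n T r d e h J σ) (hh : ∀ t ∈ Icc 1 T, 0 ≤ h t) {t : ℕ} (ht : t ≤ T + 1) :
    ∑ i ∈ J with σ i < t, (e i + h (σ i)) ≤ ∑ τ ∈ Icc 1 (t - 1), h τ :=
  sub_nonneg.mp (hfeas.energyBefore_nonneg hh t ht)

lemma energyBefore_eq_sum_sdiff_image_sub (hinj : Set.InjOn σ J) (hσ : ∀ i ∈ J, 1 ≤ σ i)
    (t : ℕ) : energyBefore e h J σ t =
      ∑ τ ∈ Icc 1 (t - 1) \ J.image σ, h τ - ∑ i ∈ J with σ i < t, e i := by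
  set early := J.filter fun i => σ i < t
  have hearly : early.image σ ⊆ Icc 1 (t - 1) := by
    intro τ hτ
    obtain ⟨i, hi, rfl⟩ := mem_image.mp hτ
    obtain ⟨hiJ, hit⟩ := mem_filter.mp hi
    exact mem_Icc.mpr ⟨hσ i hiJ, by omega⟩
  have hfree : Icc 1 (t - 1) \ J.image σ = Icc 1 (t - 1) \ early.image σ := by
    ext τ
    simp only [mem_sdiff, mem_Icc, mem_image, mem_filter, early]
    constructor
    · rintro ⟨hτ, hnot⟩
      exact ⟨hτ, fun ⟨i, ⟨hi, _⟩, hiτ⟩ => hnot ⟨i, hi, hiτ⟩⟩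
    · rintro ⟨hτ, hnot⟩
      exact ⟨hτ, fun ⟨i, hi, hiτ⟩ => hnot ⟨i, ⟨hi, by omega⟩, hiτ⟩⟩
  rw [hfree, sum_sdiff_eq_sub hearly, sum_image (hinj.mono (coe_subset.mpr (filter_subset _ _))),
    energyBefore, sum_add_distrib]
  ring

lemma le_energyBefore_of_sum_le (hinj : Set.InjOn σ J) (hσ : ∀ i ∈ J, 1 ≤ σ i) {i : ℕ}
    {X F : Finset ℕ} (hX : insert i {j ∈ J | σ j < σ i} ⊆ X) (he : ∀ j ∈ X, 0 ≤ e j)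
    (hF : F ⊆ Icc 1 (σ i - 1) \ J.image σ) (hh : ∀ τ ∈ Icc 1 (σ i - 1), 0 ≤ h τ)
    (hXF : ∑ j ∈ X, e j ≤ ∑ τ ∈ F, h τ) : e i ≤ energyBefore e h J σ (σ i) := by
  have hfree : ∑ τ ∈ F, h τ ≤ ∑ τ ∈ Icc 1 (σ i - 1) \ J.image σ, h τ :=
    sum_le_sum_of_subset_of_nonneg hF fun τ hτ _ => hh τ (mem_sdiff.mp hτ).1
  have hdemand : ∑ j ∈ insert i {j ∈ J | σ j < σ i}, e j ≤ ∑ j ∈ X, e j :=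
    sum_le_sum_of_subset_of_nonneg hX fun j hj _ => he j hj
  rw [sum_insert (by simp)] at hdemand
  rw [energyBefore_eq_sum_sdiff_image_sub hinj hσ]
  linarith

lemma IsFeasible.harvest_apply_nonneg {n T : ℕ} {r d : ℕ → ℕ}
    (hfeas : IsFeasible n T r d e h J σ) (hh : ∀ t ∈ Icc 1 T, 0 ≤ h t) :
    ∀ i ∈ J, 0 ≤ h (σ i) := fun i hi =>
  hh _ (mem_Icc.mpr ⟨(hfeas.2.2 i hi).1, (hfeas.2.2 i hi).2.1⟩)

lemma IsFeasible.card_filter_le {n T m : ℕ} {r d : ℕ → ℕ} (hfeas : IsFeasible n T r d e h J σ)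
    (hm : ∀ i ∈ J, σ i ≠ m) : #{i ∈ J | m ≤ σ i} ≤ T - m := by
  obtain ⟨-, hinj, hjob⟩ := hfeas
  have hlate : #{i ∈ J | m ≤ σ i} ≤ #(Icc (m + 1) T) := by
    refine card_le_card_of_injOn σ (fun i hi => ?_) (hinj.mono (coe_subset.mpr (filter_subset _ _)))
    obtain ⟨hi, hmi⟩ := mem_filter.mp (mem_coe.mp hi)
    exact mem_Icc.mpr ⟨Nat.succ_le_of_lt (lt_of_le_of_ne hmi (hm i hi).symm), (hjob i hi).2.1⟩
  simpa using hlate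

end EnergyDynamics

def ksumSchedule (n : ℕ) (I : Finset ℕ) (i : ℕ) : ℕ :=
  if i ∈ I then i + 1 else n + 3 + #{j ∈ Icc 1 n \ I | j < i}

section KSumSchedule

variable {n : ℕ} {I : Finset ℕ} {i : ℕ}

lemma ksumSchedule_of_mem (hi : i ∈ I) : ksumSchedule n I i = i + 1 := if_pos hi

lemma ksumSchedule_of_notMem (hi : i ∉ I) :
    ksumSchedule n I i = n + 3 + #{j ∈ Icc 1 n \ I | j < i} := if_neg hi

lemma add_three_le_ksumSchedule (hi : i ∉ I) : n + 3 ≤ ksumSchedule n I i := by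
  rw [ksumSchedule_of_notMem hi]
  omega

lemma add_one_le_ksumSchedule (hi : i ≤ n) : i + 1 ≤ ksumSchedule n I i := by
  by_cases hiI : i ∈ I
  · exact (ksumSchedule_of_mem hiI).ge
  · have := add_three_le_ksumSchedule (n := n) hiI
    omega

lemma ksumSchedule_le (hI : I ⊆ Icc 1 n) (hi : i ∈ Icc 1 n) :
    ksumSchedule n I i ≤ 2 * n - #I + 2 := by
  have hIn : #I ≤ n := (card_le_card hI).trans (by simp)
  by_cases hiI : i ∈ I
  · rw [ksumSchedule_of_mem hiI]
    have := (mem_Icc.mp hi).2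
    omega
  · have hrank := card_filter_lt_lt_card (mem_sdiff.mpr ⟨hi, hiI⟩)
    rw [card_sdiff_of_subset hI, Nat.card_Icc] at hrank
    rw [ksumSchedule_of_notMem hiI]
    omega

lemma injOn_ksumSchedule : Set.InjOn (ksumSchedule n I) (Icc 1 n) := by
  have hrank : StrictMonoOn (ksumSchedule n I) ↑(Icc 1 n \ I) := fun i hi j hj hij => by
    rw [ksumSchedule_of_notMem (mem_sdiff.mp hi).2, ksumSchedule_of_notMem (mem_sdiff.mp hj).2]
    exact Nat.add_lt_add_left (card_filter_lt_lt_card_filter_lt hi hij) _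
  intro i hi j hj hij
  rw [mem_coe, mem_Icc] at hi hj
  by_cases hiI : i ∈ I <;> by_cases hjI : j ∈ I
  · rw [ksumSchedule_of_mem hiI, ksumSchedule_of_mem hjI] at hij
    omega
  · have := add_three_le_ksumSchedule (n := n) hjI
    rw [ksumSchedule_of_mem hiI] at hij
    omega
  · have := add_three_le_ksumSchedule (n := n) hiI
    rw [ksumSchedule_of_mem hjI] at hij
    omega
  · exact hrank.injOn (by simp [hi, hiI]) (by simp [hj, hjI]) hij

end KSumSchedule

section Reduction

variable {n k : ℕ} {α : ℕ → ℤ} {S β : ℤ} {e h : ℕ → ℤ} {I : Finset ℕ} {i : ℕ}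

lemma sum_energy_eq (he : ∀ i, e i = S ^ 2 * n ^ 2 + α i * (S * n)) (X : Finset ℕ) :
    ∑ i ∈ X, e i = #X * (S ^ 2 * n ^ 2) + (∑ i ∈ X, α i) * (S * n) := by
  simp only [he, sum_add_distrib, sum_const, nsmul_eq_mul, sum_mul]

lemma sum_harvest_add_one (hh2 : ∀ t, 2 ≤ t → t ≤ n + 1 → h t = S - α (t - 1))
    {X : Finset ℕ} (hX : X ⊆ Icc 1 n) : ∑ i ∈ X, h (i + 1) = #X * S - ∑ i ∈ X, α i := by
  rw [sum_congr rfl fun i hi => by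
      have := mem_Icc.mp (hX hi)
      rw [hh2 (i + 1) (by omega) (by omega), Nat.add_sub_cancel],
    sum_sub_distrib, sum_const, nsmul_eq_mul]

lemma sum_harvest_Icc_succ (hS : S = ∑ i ∈ Icc 1 n, α i)
    (hh2 : ∀ t, 2 ≤ t → t ≤ n + 1 → h t = S - α (t - 1)) :
    ∑ t ∈ Icc 1 (n + 1), h t = h 1 + (n - 1) * S := by
  rw [sum_Icc_one_succ_eq_add_sum, sum_harvest_add_one hh2 subset_rfl, ← hS, Nat.card_Icc,
    Nat.add_sub_cancel]
  ring

lemma sum_harvest_Icc_succ_succ (hS : S = ∑ i ∈ Icc 1 n, α i)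
    (hh2 : ∀ t, 2 ≤ t → t ≤ n + 1 → h t = S - α (t - 1)) :
    ∑ t ∈ Icc 1 (n + 2), h t = h 1 + h (n + 2) + (n - 1) * S := by
  rw [sum_Icc_succ_top (by omega), sum_harvest_Icc_succ hS hh2]
  ring

lemma sum_harvest_Icc_total (hkn : k ≤ n) (hS : S = ∑ i ∈ Icc 1 n, α i)
    (hh2 : ∀ t, 2 ≤ t → t ≤ n + 1 → h t = S - α (t - 1))
    (hh4 : ∀ t, n + 3 ≤ t → t ≤ 2 * n - k + 2 → h t = 0) :
    ∑ t ∈ Icc 1 (2 * n - k + 2), h t = h 1 + h (n + 2) + (n - 1) * S := by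
  rw [← sum_harvest_Icc_succ_succ hS hh2]
  refine (sum_subset (Icc_subset_Icc_right (by omega)) fun t ht hnot => ?_).symm
  simp only [mem_Icc, not_and, not_le] at ht hnot
  exact hh4 t (by omega) ht.2

lemma mul_lt_harvest_n_add_two (hβ : 0 < β) (hβS : β < S) (hkn : k < n)
    (hh3 : h (n + 2) =
      (n - k) * (S ^ 2 * n ^ 2) + (S - β) * (S * n) - S * ((n : ℤ) - k - 1) - β) :
    k * S < h (n + 2) := by
  have hkn' : (k : ℤ) + 1 ≤ n := by exact_mod_cast hkn
  have hU : 1 ≤ S * n := one_le_mul_of_one_le_of_one_le (by omega) (by omega)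
  have hM : S * n ≤ S ^ 2 * n ^ 2 := by nlinarith
  rw [hh3]
  nlinarith [mul_nonneg (show (0 : ℤ) ≤ n - k - 1 by omega) (show 0 ≤ S ^ 2 * n ^ 2 - S by nlinarith),
    mul_nonneg (show 0 ≤ S - β - 1 by omega) (show 0 ≤ S * n by omega)]

lemma harvest_nonneg (hα_pos : ∀ i ∈ Icc 1 n, 0 < α i) (hS : S = ∑ i ∈ Icc 1 n, α i)
    (hβ : 0 < β) (hβS : β < S) (hkn : k < n)
    (hh1 : h 1 = k * (S ^ 2 * n ^ 2) + β * (S * n))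
    (hh2 : ∀ t, 2 ≤ t → t ≤ n + 1 → h t = S - α (t - 1))
    (hh3 : h (n + 2) =
      (n - k) * (S ^ 2 * n ^ 2) + (S - β) * (S * n) - S * ((n : ℤ) - k - 1) - β)
    (hh4 : ∀ t, n + 3 ≤ t → t ≤ 2 * n - k + 2 → h t = 0) :
    ∀ t ∈ Icc 1 (2 * n - k + 2), 0 ≤ h t := by
  intro t ht
  obtain ⟨ht1, htT⟩ := mem_Icc.mp ht
  have hS0 : 0 < S := hβ.trans hβS
  rcases (show t = 1 ∨ 2 ≤ t ∧ t ≤ n + 1 ∨ t = n + 2 ∨ n + 3 ≤ t by omega)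
    with rfl | ⟨ht2, htn⟩ | rfl | ht3
  · rw [hh1]; positivity
  · rw [hh2 t ht2 htn, sub_nonneg, hS]
    exact single_le_sum (fun i hi => (hα_pos i hi).le) (mem_Icc.mpr ⟨by omega, by omega⟩)
  · exact (mul_nonneg (Nat.cast_nonneg k) hS0.le).trans (mul_lt_harvest_n_add_two hβ hβS hkn hh3).le
  · exact (hh4 t ht3 htT).ge

lemma sub_le_harvest (hα_sorted : ∀ i j, 1 ≤ i → i ≤ j → j ≤ n → α j ≤ α i)
    (hh2 : ∀ t, 2 ≤ t → t ≤ n + 1 → h t = S - α (t - 1)) {i t : ℕ} (hi : 1 ≤ i)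
    (hit : i + 1 ≤ t) (ht : t ≤ n + 1) : S - α i ≤ h t := by
  rw [hh2 t (by omega) ht]
  linarith [hα_sorted i (t - 1) hi (by omega) (by omega)]

lemma IsFeasible.sum_harvest_busy_le {r d σ : ℕ → ℕ} (hS : S = ∑ i ∈ Icc 1 n, α i) (hkn : k ≤ n)
    (he : ∀ i, e i = S ^ 2 * n ^ 2 + α i * (S * n))
    (hh1 : h 1 = k * (S ^ 2 * n ^ 2) + β * (S * n))
    (hh2 : ∀ t, 2 ≤ t → t ≤ n + 1 → h t = S - α (t - 1))
    (hh3 : h (n + 2) =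
      (n - k) * (S ^ 2 * n ^ 2) + (S - β) * (S * n) - S * ((n : ℤ) - k - 1) - β)
    (hh4 : ∀ t, n + 3 ≤ t → t ≤ 2 * n - k + 2 → h t = 0)
    (hh : ∀ t ∈ Icc 1 (2 * n - k + 2), 0 ≤ h t)
    (hfeas : IsFeasible n (2 * n - k + 2) r d e h (Icc 1 n) σ) :
    ∑ i ∈ Icc 1 n, h (σ i) ≤ k * S - β := by
  have hall := hfeas.sum_le_sum_Icc hh le_rfl
  rw [filter_true_of_mem fun i hi => Nat.lt_succ_of_le (hfeas.2.2 i hi).2.1, sum_add_distrib,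
    sum_energy_eq he, ← hS, Nat.card_Icc, Nat.add_sub_cancel, Nat.add_sub_cancel,
    sum_harvest_Icc_total hkn hS hh2 hh4, hh1, hh3] at hall
  linarith

lemma IsFeasible.card_early_eq_and_sum_le {r d σ : ℕ → ℕ} (hα_pos : ∀ i ∈ Icc 1 n, 0 < α i)
    (hS : S = ∑ i ∈ Icc 1 n, α i) (hβ : 0 < β) (hβS : β < S) (hkn : k < n)
    (he : ∀ i, e i = S ^ 2 * n ^ 2 + α i * (S * n))
    (hh1 : h 1 = k * (S ^ 2 * n ^ 2) + β * (S * n))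
    (hh2 : ∀ t, 2 ≤ t → t ≤ n + 1 → h t = S - α (t - 1))
    (hh : ∀ t ∈ Icc 1 (2 * n - k + 2), 0 ≤ h t)
    (hfeas : IsFeasible n (2 * n - k + 2) r d e h (Icc 1 n) σ)
    (hk : k ≤ #{i ∈ Icc 1 n | σ i < n + 2}) :
    #{i ∈ Icc 1 n | σ i < n + 2} = k ∧ ∑ i ∈ Icc 1 n with σ i < n + 2, α i ≤ β := by
  set A := {i ∈ Icc 1 n | σ i < n + 2}
  have hS0 : 0 < S := hβ.trans hβS
  have hn1 : (1 : ℤ) ≤ n := by omega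
  have hearly : ∑ i ∈ A, (e i + h (σ i)) ≤ ∑ τ ∈ Icc 1 (n + 1), h τ :=
    hfeas.sum_le_sum_Icc hh (t := n + 2) (by omega)
  have hlost : 0 ≤ ∑ i ∈ A, h (σ i) :=
    sum_nonneg fun i hi => hfeas.harvest_apply_nonneg hh i (filter_subset _ _ hi)
  rw [sum_add_distrib, sum_energy_eq he, sum_harvest_Icc_succ hS hh2, hh1] at hearly
  have hdigits : (#A : ℤ) * (S ^ 2 * n ^ 2) + (∑ i ∈ A, α i) * (S * n) ≤
      k * (S ^ 2 * n ^ 2) + β * (S * n) + (n - 1) * S := by linarith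
  have hβU : β * (S * n) ≤ (S - 1) * (S * n) :=
    mul_le_mul_of_nonneg_right (by omega) (by positivity)
  have hU : S * n ≤ S * n * n := le_mul_of_one_le_right (by positivity) hn1
  obtain ⟨hcard, hsum⟩ := eq_and_le_of_mul_add_mul_le hdigits (by exact_mod_cast hk)
    (sum_nonneg fun i hi => (hα_pos i (filter_subset _ _ hi)).le) (by positivity) (by positivity)
    (by linarith) (by nlinarith)
  exact ⟨by exact_mod_cast hcard, hsum⟩

lemma exists_ksum_of_isFeasible {r d σ : ℕ → ℕ}
    (hα_pos : ∀ i ∈ Icc 1 n, 0 < α i)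
    (hα_sorted : ∀ i j, 1 ≤ i → i ≤ j → j ≤ n → α j ≤ α i)
    (hS : S = ∑ i ∈ Icc 1 n, α i) (hβ : 0 < β) (hβS : β < S) (hkn : k < n)
    (hr : ∀ i, r i = i + 1)
    (he : ∀ i, e i = S ^ 2 * n ^ 2 + α i * (S * n))
    (hh1 : h 1 = k * (S ^ 2 * n ^ 2) + β * (S * n))
    (hh2 : ∀ t, 2 ≤ t → t ≤ n + 1 → h t = S - α (t - 1))
    (hh3 : h (n + 2) =
      (n - k) * (S ^ 2 * n ^ 2) + (S - β) * (S * n) - S * ((n : ℤ) - k - 1) - β)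
    (hh4 : ∀ t, n + 3 ≤ t → t ≤ 2 * n - k + 2 → h t = 0)
    (hh : ∀ t ∈ Icc 1 (2 * n - k + 2), 0 ≤ h t)
    (hfeas : IsFeasible n (2 * n - k + 2) r d e h (Icc 1 n) σ) :
    ∃ I ⊆ Icc 1 n, #I = k ∧ ∑ i ∈ I, α i = β := by
  have hσh := hfeas.harvest_apply_nonneg hh
  have hlost := hfeas.sum_harvest_busy_le hS hkn.le he hh1 hh2 hh3 hh4 hh
  have hfree : ∀ i ∈ Icc 1 n, σ i ≠ n + 2 := by
    intro i hi hσi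
    have hbusy : h (σ i) ≤ k * S - β := (single_le_sum hσh hi).trans hlost
    rw [hσi] at hbusy
    linarith [mul_lt_harvest_n_add_two hβ hβS hkn hh3]
  have hlate := hfeas.card_filter_le hfree
  have hsplit := card_filter_add_card_filter_not (s := Icc 1 n) (p := fun i => σ i < n + 2)
  simp only [not_lt, Nat.card_Icc] at hsplit
  set A := {i ∈ Icc 1 n | σ i < n + 2}
  have hkA : k ≤ #A := by omega
  obtain ⟨hcard, hsum_le⟩ :=
    hfeas.card_early_eq_and_sum_le hα_pos hS hβ hβS hkn he hh1 hh2 hh hkA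
  have hβA : β ≤ ∑ i ∈ A, α i := by
    have hlostA : ∑ i ∈ A, (S - α i) ≤ ∑ i ∈ Icc 1 n, h (σ i) := by
      refine (sum_le_sum fun i hi => ?_).trans
        (sum_le_sum_of_subset_of_nonneg (filter_subset _ _) fun i hi _ => hσh i hi)
      obtain ⟨hi, hσi⟩ := mem_filter.mp hi
      exact sub_le_harvest hα_sorted hh2 (mem_Icc.mp hi).1 (hr i ▸ (hfeas.2.2 i hi).2.2.1)
        (by omega)
    rw [sum_sub_distrib, sum_const, nsmul_eq_mul, hcard] at hlostA
    linarith
  exact ⟨A, filter_subset _ _, hcard, le_antisymm hsum_le hβA⟩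


lemma energy_nonneg (hα_pos : ∀ i ∈ Icc 1 n, 0 < α i) (hS : S = ∑ i ∈ Icc 1 n, α i)
    (he : ∀ i, e i = S ^ 2 * n ^ 2 + α i * (S * n)) : ∀ i ∈ Icc 1 n, 0 ≤ e i := by
  have hS0 : 0 ≤ S := hS ▸ sum_nonneg fun i hi => (hα_pos i hi).le
  intro i hi
  rw [he]
  exact add_nonneg (by positivity) (mul_nonneg (hα_pos i hi).le (by positivity))

lemma le_energyBefore_ksumSchedule_of_mem (hα_pos : ∀ i ∈ Icc 1 n, 0 < α i)
    (hS : S = ∑ i ∈ Icc 1 n, α i) (he : ∀ i, e i = S ^ 2 * n ^ 2 + α i * (S * n))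
    (hh1 : h 1 = k * (S ^ 2 * n ^ 2) + β * (S * n)) (hh : ∀ t ∈ Icc 1 n, 0 ≤ h t)
    (hI : I ⊆ Icc 1 n) (hIk : #I = k) (hIβ : ∑ i ∈ I, α i = β) (hiI : i ∈ I) :
    e i ≤ energyBefore e h (Icc 1 n) (ksumSchedule n I) (ksumSchedule n I i) := by
  have hi := mem_Icc.mp (hI hiI)
  have hσ : ∀ j ∈ Icc 1 n, 2 ≤ ksumSchedule n I j := fun j hj =>
    (add_one_le_ksumSchedule (mem_Icc.mp hj).2).trans' (by simp [(mem_Icc.mp hj).1])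
  refine le_energyBefore_of_sum_le injOn_ksumSchedule (fun j hj => (hσ j hj).trans' one_le_two)
    (X := I) (F := {1}) (insert_subset hiI fun j hj => ?_)
    (fun j hj => energy_nonneg hα_pos hS he j (hI hj)) ?_ (fun τ hτ => hh τ ?_) ?_
  · obtain ⟨hj, hjσ⟩ := mem_filter.mp hj
    by_contra hjI
    have := add_three_le_ksumSchedule (n := n) hjI
    rw [ksumSchedule_of_mem hiI] at hjσ
    omega
  · refine singleton_subset_iff.mpr (mem_sdiff.mpr ⟨mem_Icc.mpr ⟨le_rfl, ?_⟩, fun h1 => ?_⟩)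
    · rw [ksumSchedule_of_mem hiI]
      omega
    · obtain ⟨j, hj, hj1⟩ := mem_image.mp h1
      have := hσ j hj
      omega
  · rw [ksumSchedule_of_mem hiI, Nat.add_sub_cancel] at hτ
    exact Icc_subset_Icc_right hi.2 hτ
  · rw [sum_singleton, sum_energy_eq he, hIk, hIβ, hh1]

lemma le_energyBefore_ksumSchedule_of_notMem (hα_pos : ∀ i ∈ Icc 1 n, 0 < α i)
    (hS : S = ∑ i ∈ Icc 1 n, α i) (he : ∀ i, e i = S ^ 2 * n ^ 2 + α i * (S * n))
    (hh1 : h 1 = k * (S ^ 2 * n ^ 2) + β * (S * n))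
    (hh2 : ∀ t, 2 ≤ t → t ≤ n + 1 → h t = S - α (t - 1))
    (hh3 : h (n + 2) =
      (n - k) * (S ^ 2 * n ^ 2) + (S - β) * (S * n) - S * ((n : ℤ) - k - 1) - β)
    (hh : ∀ t ∈ Icc 1 (2 * n - k + 2), 0 ≤ h t)
    (hI : I ⊆ Icc 1 n) (hIk : #I = k) (hIβ : ∑ i ∈ I, α i = β) (hi : i ∈ Icc 1 n) (hiI : i ∉ I) :
    e i ≤ energyBefore e h (Icc 1 n) (ksumSchedule n I) (ksumSchedule n I i) := by
  have hσi := add_three_le_ksumSchedule (n := n) hiI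
  have hI1 : I.image (· + 1) ⊆ Icc 1 (n + 2) := fun τ hτ => by
    obtain ⟨j, hj, rfl⟩ := mem_image.mp hτ
    have := mem_Icc.mp (hI hj)
    exact mem_Icc.mpr ⟨by omega, by omega⟩
  refine le_energyBefore_of_sum_le injOn_ksumSchedule
    (fun j hj => (add_one_le_ksumSchedule (mem_Icc.mp hj).2).trans' (by simp))
    (X := Icc 1 n) (F := Icc 1 (n + 2) \ I.image (· + 1)) (insert_subset hi (filter_subset _ _))
    (energy_nonneg hα_pos hS he) (fun τ hτ => ?_) (fun τ hτ => hh τ ?_) ?_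
  · obtain ⟨hτ, hτI⟩ := mem_sdiff.mp hτ
    refine mem_sdiff.mpr ⟨Icc_subset_Icc_right (by omega) hτ, fun hmem => ?_⟩
    obtain ⟨j, hj, rfl⟩ := mem_image.mp hmem
    by_cases hjI : j ∈ I
    · exact hτI (mem_image.mpr ⟨j, hjI, (ksumSchedule_of_mem hjI).symm⟩)
    · have := add_three_le_ksumSchedule (n := n) hjI
      have := (mem_Icc.mp hτ).2
      omega
  · have := ksumSchedule_le hI hi
    rw [hIk] at this
    exact Icc_subset_Icc_right (by omega) hτ
  · rw [sum_energy_eq he, ← hS, Nat.card_Icc, sum_sdiff_eq_sub hI1,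
      sum_harvest_Icc_succ_succ hS hh2, sum_image fun _ _ _ _ => Nat.add_right_cancel,
      sum_harvest_add_one hh2 hI, hIk, hIβ, hh1, hh3, Nat.add_sub_cancel]
    exact le_of_eq (by ring)

lemma isFeasible_ksumSchedule {r d : ℕ → ℕ}
    (hα_pos : ∀ i ∈ Icc 1 n, 0 < α i) (hS : S = ∑ i ∈ Icc 1 n, α i)
    (hr : ∀ i, r i = i + 1) (hd : ∀ i, d i = 2 * n - k + 2)
    (he : ∀ i, e i = S ^ 2 * n ^ 2 + α i * (S * n))
    (hh1 : h 1 = k * (S ^ 2 * n ^ 2) + β * (S * n))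
    (hh2 : ∀ t, 2 ≤ t → t ≤ n + 1 → h t = S - α (t - 1))
    (hh3 : h (n + 2) =
      (n - k) * (S ^ 2 * n ^ 2) + (S - β) * (S * n) - S * ((n : ℤ) - k - 1) - β)
    (hh : ∀ t ∈ Icc 1 (2 * n - k + 2), 0 ≤ h t)
    (hI : I ⊆ Icc 1 n) (hIk : #I = k) (hIβ : ∑ i ∈ I, α i = β) :
    IsFeasible n (2 * n - k + 2) r d e h (Icc 1 n) (ksumSchedule n I) := by
  refine ⟨subset_rfl, injOn_ksumSchedule, fun i hi => ?_⟩
  have hrel := add_one_le_ksumSchedule (I := I) (mem_Icc.mp hi).2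
  have hdue := hIk ▸ ksumSchedule_le hI hi
  refine ⟨by omega, hdue, hr i ▸ hrel, hd i ▸ hdue, ?_⟩
  have hkn : k ≤ n := hIk ▸ (card_le_card hI).trans (by simp)
  by_cases hiI : i ∈ I
  · exact le_energyBefore_ksumSchedule_of_mem hα_pos hS he hh1
      (fun t ht => hh t (Icc_subset_Icc_right (by omega) ht)) hI hIk hIβ hiI
  · exact le_energyBefore_ksumSchedule_of_notMem hα_pos hS he hh1 hh2 hh3 hh hI hIk hIβ hi hiI

end Reduction

theorem ksum_reduction_arbitrary_release_general (n k : ℕ) (α : ℕ → ℤ) (S β : ℤ)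
    (hα_pos : ∀ i ∈ Finset.Icc 1 n, 0 < α i)
    (hα_sorted : ∀ i j, 1 ≤ i → i ≤ j → j ≤ n → α j ≤ α i)
    (hS : S = ∑ i ∈ Finset.Icc 1 n, α i)
    (hβ : 0 < β) (hβS : β < S)
    (hkn : k < n)
    (r : ℕ → ℕ) (hr : ∀ i, r i = i + 1)
    (d : ℕ → ℕ) (hd : ∀ i, d i = 2 * n - k + 2)
    (e : ℕ → ℤ) (he : ∀ i, e i = S ^ 2 * n ^ 2 + α i * (S * n))
    (h : ℕ → ℤ)
    (hh1 : h 1 = k * (S ^ 2 * n ^ 2) + β * (S * n))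
    (hh2 : ∀ t, 2 ≤ t → t ≤ n + 1 → h t = S - α (t - 1))
    (hh3 : h (n + 2) =
      (n - k) * (S ^ 2 * n ^ 2) + (S - β) * (S * n) - S * ((n : ℤ) - k - 1) - β)
    (hh4 : ∀ t, n + 3 ≤ t → t ≤ 2 * n - k + 2 → h t = 0) :
    (∃ σ : ℕ → ℕ,
      IsFeasible n (2 * n - k + 2) r d e h (Finset.Icc 1 n) σ) ↔
    ∃ I : Finset ℕ, I ⊆ Finset.Icc 1 n ∧ I.card = k ∧ ∑ i ∈ I, α i = β := by
  have hh := harvest_nonneg hα_pos hS hβ hβS hkn hh1 hh2 hh3 hh4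
  constructor
  · rintro ⟨σ, hfeas⟩
    exact exists_ksum_of_isFeasible hα_pos hα_sorted hS hβ hβS hkn hr he hh1 hh2 hh3 hh4 hh hfeas
  · rintro ⟨I, hI, hIk, hIβ⟩
    exact ⟨_, isFeasible_ksumSchedule hα_pos hS hr hd he hh1 hh2 hh3 hh hI hIk hIβ⟩

/-- Correctness of the reduction from k-SUM to EAS with
arbitrary release times and identical due dates: the constructed instance admits
a feasible schedule of all `n` jobs iff some `k` of the `α i` sum to `β`. -/
theorem ksum_reduction_arbitrary_release (n k : ℕ) (α : ℕ → ℤ) (S β : ℤ)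
    (hn : 2 < n)
    (hα_pos : ∀ i ∈ Finset.Icc 1 n, 0 < α i)
    (hα_sorted : ∀ i j, 1 ≤ i → i ≤ j → j ≤ n → α j ≤ α i)
    (hS : S = ∑ i ∈ Finset.Icc 1 n, α i) (hS2 : 2 < S)
    (hβ : 0 < β) (hβS : β < S)
    (hk : 0 < k) (hkn : k < n)
    (r : ℕ → ℕ) (hr : ∀ i, r i = i + 1)
    (d : ℕ → ℕ) (hd : ∀ i, d i = 2 * n - k + 2)
    (e : ℕ → ℤ) (he : ∀ i, e i = S ^ 2 * n ^ 2 + α i * (S * n))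
    (h : ℕ → ℤ)
    (hh1 : h 1 = k * (S ^ 2 * n ^ 2) + β * (S * n))
    (hh2 : ∀ t, 2 ≤ t → t ≤ n + 1 → h t = S - α (t - 1))
    (hh3 : h (n + 2) =
      (n - k) * (S ^ 2 * n ^ 2) + (S - β) * (S * n) - S * ((n : ℤ) - k - 1) - β)
    (hh4 : ∀ t, n + 3 ≤ t → t ≤ 2 * n - k + 2 → h t = 0) :
    (∃ σ : ℕ → ℕ,
      IsFeasible n (2 * n - k + 2) r d e h (Finset.Icc 1 n) σ) ↔
    ∃ I : Finset ℕ, I ⊆ Finset.Icc 1 n ∧ I.card = k ∧ ∑ i ∈ I, α i = β :=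
  ksum_reduction_arbitrary_release_general n k α S β hα_pos hα_sorted hS hβ hβS hkn r hr d hd e he h
    hh1 hh2 hh3 hh4
end
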